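/- (Lemma 3.2, optimality condition.) A matrix x* ∈ ℝ^{n×p} is consensual with common row x̄ ∈ ℝ^p (i.e., every row of x* equals x̄) where x̄ minimizes Σ_{i=1}^n (s_i(x) + r_i(x)) over ℝ^p, if and only if there exist p* ∈ ℝ^{n×p} and q* ∈ ∂r(x*) such that (I − W)p* + ∇s(x*) + q* = 0 and (I − W)x* = 0. Moreover, in that case, setting d* = (I − W)p* and z* = x* + Λ q*, the pair (d*, z*) is a fixed point of the NIDS iteration. -/

import Mathlib

open Matrix Filter Topology

noncomputable section

/-- Trace inner product `⟨x, y⟩ = tr(xᵀ y)` on `n × p` real matrices. -/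
def iprod {n p : ℕ} (x y : Matrix (Fin n) (Fin p) ℝ) : ℝ := (xᵀ * y).trace

/-- Weighted inner product `⟨x, y⟩_Q = tr(xᵀ Q y)`. -/
def iprodQ {n p : ℕ} (Q : Matrix (Fin n) (Fin n) ℝ) (x y : Matrix (Fin n) (Fin p) ℝ) : ℝ :=
  (xᵀ * Q * y).trace

/-- Weighted squared (semi)norm `‖x‖_Q² = tr(xᵀ Q x)`. -/
def nsq {n p : ℕ} (Q : Matrix (Fin n) (Fin n) ℝ) (x : Matrix (Fin n) (Fin p) ℝ) : ℝ :=
  iprodQ Q x x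

/-- `∇s(x)`: the matrix whose `i`-th row is the gradient field `g i` applied to the `i`-th
row of `x`. -/
def gradS {n p : ℕ} (g : Fin n → EuclideanSpace ℝ (Fin p) → EuclideanSpace ℝ (Fin p))
    (x : Matrix (Fin n) (Fin p) ℝ) : Matrix (Fin n) (Fin p) ℝ :=
  Matrix.of fun i => WithLp.equiv 2 (Fin p → ℝ) (g i ((WithLp.equiv 2 (Fin p → ℝ)).symm (x i)))

/-- `x ∈ range(A)`, i.e. `x = A y` for some `y ∈ ℝ^{n×p}`. -/
def InRange {n p : ℕ} (A : Matrix (Fin n) (Fin n) ℝ) (x : Matrix (Fin n) (Fin p) ℝ) : Prop :=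
  ∃ y : Matrix (Fin n) (Fin p) ℝ, x = A * y

/-- `B` is the Moore–Penrose pseudoinverse of `A`. -/
def IsMoorePenrose {n : ℕ} (A B : Matrix (Fin n) (Fin n) ℝ) : Prop :=
  A * B * A = A ∧ B * A * B = B ∧ (A * B)ᵀ = A * B ∧ (B * A)ᵀ = B * A

/-- `r(x) = Σᵢ rᵢ(xᵢ)` where `xᵢ` is the `i`-th row of `x`. -/
def rsum {n p : ℕ} (r : Fin n → (Fin p → ℝ) → ℝ) (x : Matrix (Fin n) (Fin p) ℝ) : ℝ :=
  ∑ i, r i (x i)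

/-- `q ∈ ∂r(x)`: subgradient of `rsum r` at `x` w.r.t. the trace inner product. -/
def IsSubgrad {n p : ℕ} (r : Fin n → (Fin p → ℝ) → ℝ) (x q : Matrix (Fin n) (Fin p) ℝ) : Prop :=
  ∀ y : Matrix (Fin n) (Fin p) ℝ, rsum r x + iprod q (y - x) ≤ rsum r y

/-- `t` is an eigenvalue of the real matrix `A`. -/
def IsEig {n : ℕ} (A : Matrix (Fin n) (Fin n) ℝ) (t : ℝ) : Prop :=
  ∃ v : Fin n → ℝ, v ≠ 0 ∧ A *ᵥ v = t • v

/-- The mixing matrix assumption: symmetry, null space of `I - W` is the span of the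
all-ones vector, and `2I ≽ W + I ≻ 0`. -/
def IsMixing {n : ℕ} (W : Matrix (Fin n) (Fin n) ℝ) : Prop :=
  Wᵀ = W ∧ (∀ v : Fin n → ℝ, (1 - W) *ᵥ v = 0 ↔ ∃ t : ℝ, v = fun _ => t) ∧
    (W + 1).PosDef ∧ ((2 : ℝ) • (1 : Matrix (Fin n) (Fin n) ℝ) - (W + 1)).PosSemidef

/-- `x` is a minimizer over `ℝ^{n×p}` of `u ↦ r(u) + ½‖u − z‖²_{Λ⁻¹}` where `Λ = diag α`. -/
def ProxMin {n p : ℕ} (r : Fin n → (Fin p → ℝ) → ℝ) (α : Fin n → ℝ)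
    (z x : Matrix (Fin n) (Fin p) ℝ) : Prop :=
  ∀ u : Matrix (Fin n) (Fin p) ℝ,
    rsum r x + 1 / 2 * nsq (Matrix.diagonal fun i => (α i)⁻¹) (x - z) ≤
      rsum r u + 1 / 2 * nsq (Matrix.diagonal fun i => (α i)⁻¹) (u - z)

/-- `(d, z)` is a fixed point of the NIDS iteration. -/
def NIDSFixed {n p : ℕ} (W : Matrix (Fin n) (Fin n) ℝ) (α : Fin n → ℝ) (c : ℝ)
    (g : Fin n → EuclideanSpace ℝ (Fin p) → EuclideanSpace ℝ (Fin p))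
    (r : Fin n → (Fin p → ℝ) → ℝ) (d z : Matrix (Fin n) (Fin p) ℝ) : Prop :=
  ∃ x : Matrix (Fin n) (Fin p) ℝ, ProxMin r α z x ∧
    d = d + c • ((1 - W) *
      ((2 : ℝ) • x - z - Matrix.diagonal α * gradS g x - Matrix.diagonal α * d)) ∧
    z = x - Matrix.diagonal α * gradS g x - Matrix.diagonal α * d

end

/-!
On the consensus subspace `ker (I - W) = {𝟙 wᵀ}` the objective `s(x) + r(x)` reads
`Σᵢ sᵢ(w) + rᵢ(w)`, so `x*` is a consensual minimizer iff `(I - W) x* = 0` and `x*` minimizes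
`s + r` on the coset `x* + ker (I - W)`. Such a constrained minimum yields, by Hahn–Banach with
the one-sided directional derivative of `s + r` as sublinear majorant, a linear functional
vanishing on `ker (I - W)` which is a subgradient of `s + r`; removing the gradient of the smooth
part leaves a subgradient `q*` of `r`. Since `I - W` is symmetric, the functionals vanishing on
its kernel are exactly `⟨(I - W) p, ·⟩`. Conversely the gradient inequality for `s` and the
subgradient inequality for `r` add up, the cross term `⟨(I - W) p*, y - x*⟩` vanishing for
consensual `y`. For the fixed point, `x* + Λ q*` is the prox-optimality condition of `x*`, and
both NIDS updates collapse by `(I - W) x* = 0` and `(I - W) p* + ∇s(x*) + q* = 0`.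
-/

open Set

lemma HasDerivWithinAt.nonneg_of_forall_le {f : ℝ → ℝ} {f' a : ℝ}
    (hf : HasDerivWithinAt f f' (Ioi a) a) (hmin : ∀ t, a < t → f a ≤ f t) : 0 ≤ f' :=
  ge_of_tendsto ((hasDerivWithinAt_iff_tendsto_slope' self_notMem_Ioi).mp hf) <|
    eventually_nhdsWithin_of_forall fun t (ht : a < t) => by
      rw [slope_def_field]; exact div_nonneg (sub_nonneg.mpr (hmin t ht)) (sub_pos.mpr ht).le

section DirectionalDerivative

variable {E : Type*} [AddCommGroup E] [Module ℝ E] {Φ : E → ℝ}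

lemma ConvexOn.comp_line (hΦ : ConvexOn ℝ univ Φ) (x h : E) :
    ConvexOn ℝ univ fun t : ℝ => Φ (x + t • h) := by
  refine ⟨convex_univ, fun a _ b _ μ ν hμ hν hμν => ?_⟩
  convert hΦ.2 (mem_univ (x + a • h)) (mem_univ (x + b • h)) hμ hν hμν using 2
  rw [smul_add, smul_add, add_add_add_comm, ← add_smul, hμν, one_smul, smul_smul, smul_smul,
    ← add_smul, smul_eq_mul, smul_eq_mul]

noncomputable def rightDirDeriv (Φ : E → ℝ) (x h : E) : ℝ :=
  derivWithin (fun t : ℝ => Φ (x + t • h)) (Ioi 0) 0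

lemma ConvexOn.hasDerivWithinAt_rightDirDeriv (hΦ : ConvexOn ℝ univ Φ) (x h : E) :
    HasDerivWithinAt (fun t : ℝ => Φ (x + t • h)) (rightDirDeriv Φ x h) (Ioi 0) 0 :=
  (hΦ.comp_line x h).hasDerivWithinAt_rightDeriv_of_mem_interior (by simp)

lemma ConvexOn.rightDirDeriv_le (hΦ : ConvexOn ℝ univ Φ) (x h : E) :
    rightDirDeriv Φ x h ≤ Φ (x + h) - Φ x := by
  simpa [rightDirDeriv, slope_def_field] using
    (hΦ.comp_line x h).rightDeriv_le_slope_of_mem_interior (by simp) (mem_univ 1) one_pos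

lemma ConvexOn.rightDirDeriv_smul (hΦ : ConvexOn ℝ univ Φ) (x h : E) {c : ℝ} (hc : 0 < c) :
    rightDirDeriv Φ x (c • h) = c * rightDirDeriv Φ x h := by
  have hmul : HasDerivWithinAt (· * c) c (Ioi 0) (0 : ℝ) := by
    simpa using ((hasDerivAt_id (0 : ℝ)).mul_const c).hasDerivWithinAt
  have hcomp := HasDerivWithinAt.comp (0 : ℝ)
    (by rw [zero_mul]; exact hΦ.hasDerivWithinAt_rightDirDeriv x h) hmul
    (fun t (ht : 0 < t) => mul_pos ht hc)
  simp only [Function.comp_def, mul_smul] at hcomp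
  rw [mul_comm]
  exact hcomp.derivWithin (uniqueDiffWithinAt_Ioi 0)

lemma ConvexOn.rightDirDeriv_add_le (hΦ : ConvexOn ℝ univ Φ) (x h₁ h₂ : E) :
    rightDirDeriv Φ x (h₁ + h₂) ≤ rightDirDeriv Φ x h₁ + rightDirDeriv Φ x h₂ := by
  have hmid : ∀ t : ℝ, Φ (x + t • (h₁ + h₂)) ≤
      (Φ (x + t • (2 : ℝ) • h₁) + Φ (x + t • (2 : ℝ) • h₂)) / 2 := fun t => by
    have hpt : x + t • (h₁ + h₂) = (1 / 2 : ℝ) • (x + t • (2 : ℝ) • h₁) +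
        (1 / 2 : ℝ) • (x + t • (2 : ℝ) • h₂) := by module
    have := hΦ.2 (mem_univ (x + t • (2 : ℝ) • h₁)) (mem_univ (x + t • (2 : ℝ) • h₂))
      (by norm_num : (0 : ℝ) ≤ 1 / 2) (by norm_num : (0 : ℝ) ≤ 1 / 2) (by norm_num)
    rw [← hpt, smul_eq_mul, smul_eq_mul] at this
    linarith
  have hderiv := (((hΦ.hasDerivWithinAt_rightDirDeriv x ((2 : ℝ) • h₁)).add
    (hΦ.hasDerivWithinAt_rightDirDeriv x ((2 : ℝ) • h₂))).div_const 2).sub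
    (hΦ.hasDerivWithinAt_rightDirDeriv x (h₁ + h₂))
  have := hderiv.nonneg_of_forall_le fun t _ => by simpa using hmid t
  rw [hΦ.rightDirDeriv_smul x h₁ two_pos, hΦ.rightDirDeriv_smul x h₂ two_pos] at this
  linarith

theorem ConvexOn.exists_linearMap_subgradient_of_forall_le_add (hΦ : ConvexOn ℝ univ Φ)
    (C : Submodule ℝ E) {x : E} (hmin : ∀ v ∈ C, Φ x ≤ Φ (x + v)) :
    ∃ ℓ : E →ₗ[ℝ] ℝ, (∀ v ∈ C, ℓ v = 0) ∧ ∀ v, Φ x + ℓ v ≤ Φ (x + v) := by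
  have hC : ∀ v : C, (0 : ℝ) ≤ rightDirDeriv Φ x v := fun v =>
    (hΦ.hasDerivWithinAt_rightDirDeriv x v).nonneg_of_forall_le fun t _ => by
      simpa using hmin _ (C.smul_mem t v.2)
  obtain ⟨ℓ, hℓC, hℓ⟩ := exists_extension_of_le_sublinear ⟨C, 0⟩ (rightDirDeriv Φ x)
    (fun c hc h => hΦ.rightDirDeriv_smul x h hc) (hΦ.rightDirDeriv_add_le x) hC
  exact ⟨ℓ, fun v hv => hℓC ⟨v, hv⟩, fun v => by linarith [hℓ v, hΦ.rightDirDeriv_le x v]⟩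

end DirectionalDerivative

section LineDerivative

variable {E : Type*} [AddCommGroup E] [Module ℝ E]

lemma ConvexOn.add_le_of_hasLineDerivAt {f : E → ℝ} (hf : ConvexOn ℝ univ f) {x v : E} {D : ℝ}
    (hD : HasLineDerivAt ℝ f D x v) : f x + D ≤ f (x + v) := by
  have := (hf.comp_line x v).le_slope_of_hasDerivAt (mem_univ 0) (mem_univ 1) one_pos hD
  simp only [slope_def_field, zero_smul, add_zero, one_smul, sub_zero, div_one] at this
  linarith

lemma ConvexOn.sub_le_of_isMinOn_add {S R : E → ℝ} (hR : ConvexOn ℝ univ R) {x v : E}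
    {D : ℝ} (hD : HasLineDerivAt ℝ S D x v) (hmin : IsMinOn (S + R) univ x) :
    R x - D ≤ R (x + v) := by
  have := (hD.hasDerivWithinAt.add (hR.hasDerivWithinAt_rightDirDeriv x v)).nonneg_of_forall_le
    fun t _ => by simpa using hmin (mem_univ (x + t • v))
  linarith [hR.rightDirDeriv_le x v]

lemma LinearMap.hasLineDerivAt (ℓ : E →ₗ[ℝ] ℝ) (x v : E) : HasLineDerivAt ℝ ℓ (ℓ v) x v := by
  simpa [HasLineDerivAt] using ((hasDerivAt_id (0 : ℝ)).mul_const (ℓ v)).const_add (ℓ x)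

variable {S R : E → ℝ} {DS : E → ℝ} {x : E}

theorem exists_subgradient_of_forall_le_add (hS : ConvexOn ℝ univ S) (hR : ConvexOn ℝ univ R)
    (hDS : ∀ v, HasLineDerivAt ℝ S (DS v) x v) (C : Submodule ℝ E)
    (hmin : ∀ v ∈ C, S x + R x ≤ S (x + v) + R (x + v)) :
    ∃ ℓ : E →ₗ[ℝ] ℝ, (∀ v ∈ C, ℓ v = 0) ∧ ∀ v, R x + ℓ v - DS v ≤ R (x + v) := by
  obtain ⟨ℓ, hℓC, hℓ⟩ := (hS.add hR).exists_linearMap_subgradient_of_forall_le_add C hmin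
  refine ⟨ℓ, hℓC, fun v => ?_⟩
  have hmin' : IsMinOn ((S - ⇑ℓ) + R) univ x := isMinOn_univ_iff.mpr fun y => by
    have := hℓ (y - x)
    simp only [Pi.add_apply, Pi.sub_apply, map_sub, add_sub_cancel] at this ⊢
    linarith
  have hD : HasLineDerivAt ℝ (S - ⇑ℓ) (DS v - ℓ v) x v := (hDS v).sub (ℓ.hasLineDerivAt x v)
  have := hR.sub_le_of_isMinOn_add hD hmin'
  linarith

theorem le_add_of_subgradient (hS : ConvexOn ℝ univ S) (hDS : ∀ v, HasLineDerivAt ℝ S (DS v) x v)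
    (C : Submodule ℝ E) (ℓ : E → ℝ) (hℓC : ∀ v ∈ C, ℓ v = 0)
    (hsub : ∀ v, R x + ℓ v - DS v ≤ R (x + v)) :
    ∀ v ∈ C, S x + R x ≤ S (x + v) + R (x + v) := fun v hv => by
  linarith [hS.add_le_of_hasLineDerivAt (hDS v), hsub v, hℓC v hv]

end LineDerivative

section Matrices

variable {n p : ℕ}

lemma iprod_eq_sum (a b : Matrix (Fin n) (Fin p) ℝ) : iprod a b = ∑ i, ∑ j, a i j * b i j := by
  simp only [iprod, Matrix.trace, Matrix.diag, Matrix.mul_apply, Matrix.transpose_apply]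
  exact Finset.sum_comm

lemma iprod_add_left (a b c : Matrix (Fin n) (Fin p) ℝ) :
    iprod (a + b) c = iprod a c + iprod b c := by
  simp [iprod, Matrix.add_mul, Matrix.trace_add]

lemma iprod_sub_left (a b c : Matrix (Fin n) (Fin p) ℝ) :
    iprod (a - b) c = iprod a c - iprod b c := by
  simp [iprod, Matrix.sub_mul, Matrix.trace_sub]

lemma iprod_mul_left (A : Matrix (Fin n) (Fin n) ℝ) (b c : Matrix (Fin n) (Fin p) ℝ) :
    iprod (A * b) c = iprod b (Aᵀ * c) := by
  simp [iprod, Matrix.transpose_mul, Matrix.mul_assoc]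

lemma exists_iprod_eq (ℓ : Matrix (Fin n) (Fin p) ℝ →ₗ[ℝ] ℝ) :
    ∃ Q, ∀ m, ℓ m = iprod Q m := by
  refine ⟨Matrix.of fun i j => ℓ (Matrix.single i j 1), fun m => ?_⟩
  have hsingle : ∀ i j, Matrix.single i j (m i j) = m i j • Matrix.single i j (1 : ℝ) :=
    fun i j => by simp [Matrix.smul_single]
  conv_lhs => rw [Matrix.matrix_eq_sum_single m]
  simp only [hsingle, map_sum, map_smul, smul_eq_mul, iprod_eq_sum, Matrix.of_apply, mul_comm]

lemma mul_eq_zero_iff_exists_rows_eq {m k : Type*} [Fintype m] {A : Matrix m m ℝ}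
    (hA : ∀ v, A *ᵥ v = 0 ↔ ∃ t : ℝ, v = fun _ => t) (y : Matrix m k ℝ) :
    A * y = 0 ↔ ∃ w, ∀ i, y i = w := by
  have hcol : ∀ j, A *ᵥ (fun i => y i j) = fun i => (A * y) i j := fun j => by
    ext i; simp [Matrix.mulVec, dotProduct, Matrix.mul_apply]
  constructor
  · intro h
    choose t ht using fun j => (hA _).1 (by rw [hcol, h]; rfl)
    exact ⟨t, fun i => funext fun j => congrFun (ht j) i⟩
  · rintro ⟨w, hw⟩
    ext i j
    rw [← congrFun (hcol j) i, (hA _).2 ⟨w j, funext fun i => by rw [hw]⟩]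
    rfl

lemma exists_mulVec_eq_of_forall_dotProduct_eq_zero {m : Type*} [Fintype m] [DecidableEq m]
    {A : Matrix m m ℝ} (hA : Aᵀ = A) {b : m → ℝ} (hb : ∀ k, A *ᵥ k = 0 → b ⬝ᵥ k = 0) :
    ∃ v, A *ᵥ v = b := by
  set T := Matrix.toEuclideanLin A
  have hT : T.IsSymmetric := Matrix.isSymmetric_toEuclideanLin_iff.mpr <| by
    rw [Matrix.IsHermitian, Matrix.conjTranspose_eq_transpose_of_trivial, hA]
  have hrange : LinearMap.range T = (LinearMap.ker T)ᗮ := by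
    rw [← Submodule.orthogonal_orthogonal (LinearMap.range T), LinearMap.orthogonal_range,
      hT.adjoint_eq]
  have hmem : WithLp.toLp 2 b ∈ LinearMap.range T := by
    rw [hrange, Submodule.mem_orthogonal]
    intro u hu
    have := hb u.ofLp (by simpa [T] using congrArg WithLp.ofLp hu)
    simpa [EuclideanSpace.inner_eq_star_dotProduct, dotProduct_comm] using this
  obtain ⟨v, hv⟩ := hmem
  exact ⟨v.ofLp, by simpa [T] using congrArg WithLp.ofLp hv⟩

lemma exists_mul_eq_of_forall_iprod_eq_zero {A : Matrix (Fin n) (Fin n) ℝ} (hA : Aᵀ = A)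
    {Q : Matrix (Fin n) (Fin p) ℝ}
    (hQ : ∀ y : Matrix (Fin n) (Fin p) ℝ, A * y = 0 → iprod Q y = 0) :
    ∃ P : Matrix (Fin n) (Fin p) ℝ, A * P = Q := by
  have hcol : ∀ j, ∃ v, A *ᵥ v = fun i => Q i j := fun j =>
    exists_mulVec_eq_of_forall_dotProduct_eq_zero hA fun k hk => by
      have := hQ (Matrix.vecMulVec k (Pi.single j 1)) (by rw [Matrix.mul_vecMulVec, hk]; simp)
      simpa [iprod_eq_sum, Matrix.vecMulVec_apply, Pi.single_apply, dotProduct, mul_comm]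
        using this
  choose v hv using hcol
  refine ⟨(Matrix.of v)ᵀ, ?_⟩
  ext i j
  rw [Matrix.mul_apply]
  simpa [Matrix.mulVec, dotProduct] using congrFun (hv j) i

end Matrices

section Objective

variable {n p : ℕ}

lemma convexOn_rsum {r : Fin n → (Fin p → ℝ) → ℝ} (hr : ∀ i, ConvexOn ℝ univ (r i)) :
    ConvexOn ℝ univ (rsum r) := by
  refine ⟨convex_univ, fun y _ z _ a b ha hb hab => ?_⟩
  simp only [rsum, smul_eq_mul, Finset.mul_sum, ← Finset.sum_add_distrib]
  exact Finset.sum_le_sum fun i _ => (hr i).2 (mem_univ _) (mem_univ _) ha hb hab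

lemma rsum_of_rows_eq (r : Fin n → (Fin p → ℝ) → ℝ) {y : Matrix (Fin n) (Fin p) ℝ} {u : Fin p → ℝ}
    (hy : ∀ i, y i = u) : rsum r y = ∑ i, r i u :=
  Finset.sum_congr rfl fun i _ => by rw [hy i]

lemma hasLineDerivAt_rsum {f : Fin n → (Fin p → ℝ) → ℝ} {D : Fin n → ℝ}
    {x v : Matrix (Fin n) (Fin p) ℝ} (hf : ∀ i, HasLineDerivAt ℝ (f i) (D i) (x i) (v i)) :
    HasLineDerivAt ℝ (rsum f) (∑ i, D i) x v :=
  HasDerivAt.fun_sum fun i _ => hf i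

def ssum (s : Fin n → EuclideanSpace ℝ (Fin p) → ℝ) : Matrix (Fin n) (Fin p) ℝ → ℝ :=
  rsum fun i u => s i ((WithLp.equiv 2 (Fin p → ℝ)).symm u)

lemma hasLineDerivAt_ssum {s : Fin n → EuclideanSpace ℝ (Fin p) → ℝ}
    {g : Fin n → EuclideanSpace ℝ (Fin p) → EuclideanSpace ℝ (Fin p)}
    (hg : ∀ i u, HasGradientAt (s i) (g i u) u) (x v : Matrix (Fin n) (Fin p) ℝ) :
    HasLineDerivAt ℝ (ssum s) (iprod (gradS g x) v) x v := by
  rw [iprod_eq_sum]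
  refine hasLineDerivAt_rsum fun i => ?_
  have := (hg i (WithLp.toLp 2 (x i))).hasFDerivAt.hasLineDerivAt (WithLp.toLp 2 (v i))
  simpa [HasLineDerivAt, gradS, PiLp.inner_apply, mul_comm] using this

lemma convexOn_ssum {s : Fin n → EuclideanSpace ℝ (Fin p) → ℝ}
    (hs : ∀ i, ConvexOn ℝ univ (s i)) : ConvexOn ℝ univ (ssum s) :=
  convexOn_rsum fun i => (hs i).comp_linearMap (WithLp.linearEquiv 2 ℝ (Fin p → ℝ)).symm.toLinearMap

lemma ssum_add_rsum_of_rows_eq (s : Fin n → EuclideanSpace ℝ (Fin p) → ℝ)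
    (r : Fin n → (Fin p → ℝ) → ℝ) {y : Matrix (Fin n) (Fin p) ℝ} {u : Fin p → ℝ}
    (hy : ∀ i, y i = u) :
    ssum s y + rsum r y = ∑ i, (s i ((WithLp.equiv 2 (Fin p → ℝ)).symm u) + r i u) := by
  rw [ssum, rsum_of_rows_eq _ hy, rsum_of_rows_eq _ hy, Finset.sum_add_distrib]

lemma nsq_diagonal (β : Fin n → ℝ) (m : Matrix (Fin n) (Fin p) ℝ) :
    nsq (Matrix.diagonal β) m = ∑ i, ∑ j, β i * m i j ^ 2 := by
  simp only [nsq, iprodQ, Matrix.trace, Matrix.diag, Matrix.mul_apply, Matrix.transpose_apply,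
    Matrix.diagonal_apply, mul_ite, mul_zero, Finset.sum_ite_eq', Finset.mem_univ, if_true]
  rw [Finset.sum_comm]
  exact Finset.sum_congr rfl fun i _ => Finset.sum_congr rfl fun j _ => by ring

lemma proxMin_of_isSubgrad {r : Fin n → (Fin p → ℝ) → ℝ} {α : Fin n → ℝ} (hα : ∀ i, 0 < α i)
    {x q : Matrix (Fin n) (Fin p) ℝ} (hq : IsSubgrad r x q) :
    ProxMin r α (x + Matrix.diagonal α * q) x := by
  intro u
  suffices 1 / 2 * nsq (Matrix.diagonal fun i => (α i)⁻¹) (x - (x + Matrix.diagonal α * q)) ≤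
      iprod q (u - x) + 1 / 2 * nsq (Matrix.diagonal fun i => (α i)⁻¹)
        (u - (x + Matrix.diagonal α * q)) by linarith [hq u]
  simp only [nsq_diagonal, iprod_eq_sum, Finset.mul_sum, ← Finset.sum_add_distrib]
  gcongr with i _ j _
  have hαi := hα i
  simp only [Matrix.sub_apply, Matrix.add_apply, Matrix.diagonal_mul]
  field_simp
  nlinarith [sq_nonneg (u i j - x i j)]

end Objective

section Optimality

variable {n p : ℕ} {A : Matrix (Fin n) (Fin n) ℝ}
  {s : Fin n → EuclideanSpace ℝ (Fin p) → ℝ}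
  {g : Fin n → EuclideanSpace ℝ (Fin p) → EuclideanSpace ℝ (Fin p)}
  {r : Fin n → (Fin p → ℝ) → ℝ} {x : Matrix (Fin n) (Fin p) ℝ}

theorem exists_optimality_of_consensus_minimizer (hA : Aᵀ = A)
    (hker : ∀ v, A *ᵥ v = 0 ↔ ∃ t : ℝ, v = fun _ => t) (hs : ∀ i, ConvexOn ℝ univ (s i))
    (hg : ∀ i u, HasGradientAt (s i) (g i u) u) (hr : ∀ i, ConvexOn ℝ univ (r i))
    {xbar : Fin p → ℝ} (hrow : ∀ i, x i = xbar)
    (hmin : ∀ u : Fin p → ℝ,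
      (∑ i, (s i ((WithLp.equiv 2 (Fin p → ℝ)).symm xbar) + r i xbar)) ≤
        ∑ i, (s i ((WithLp.equiv 2 (Fin p → ℝ)).symm u) + r i u)) :
    ∃ P q : Matrix (Fin n) (Fin p) ℝ, IsSubgrad r x q ∧ A * P + gradS g x + q = 0 ∧ A * x = 0 := by
  have hminC : ∀ v ∈ LinearMap.ker (mulLeftLinearMap (Fin p) ℝ A),
      ssum s x + rsum r x ≤ ssum s (x + v) + rsum r (x + v) := fun v hv => by
    obtain ⟨w, hw⟩ := (mul_eq_zero_iff_exists_rows_eq hker v).1 hv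
    rw [ssum_add_rsum_of_rows_eq s r hrow,
      ssum_add_rsum_of_rows_eq s r (u := xbar + w) fun i => by rw [← hrow i, ← hw i]; rfl]
    exact hmin (xbar + w)
  obtain ⟨ℓ, hℓC, hℓ⟩ := exists_subgradient_of_forall_le_add (convexOn_ssum hs)
    (convexOn_rsum hr) (hasLineDerivAt_ssum hg x) _ hminC
  obtain ⟨Q, hQ⟩ := exists_iprod_eq ℓ
  obtain ⟨P, hP⟩ := exists_mul_eq_of_forall_iprod_eq_zero hA fun y hy => hQ y ▸ hℓC y hy
  refine ⟨-P, Q - gradS g x, fun y => ?_, by rw [Matrix.mul_neg, hP]; abel,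
    (mul_eq_zero_iff_exists_rows_eq hker x).2 ⟨xbar, hrow⟩⟩
  have := hℓ (y - x)
  rw [hQ, add_sub_cancel] at this
  rw [iprod_sub_left]
  linarith

theorem consensus_minimizer_of_optimality (hA : Aᵀ = A)
    (hker : ∀ v, A *ᵥ v = 0 ↔ ∃ t : ℝ, v = fun _ => t) (hs : ∀ i, ConvexOn ℝ univ (s i))
    (hg : ∀ i u, HasGradientAt (s i) (g i u) u) {P q : Matrix (Fin n) (Fin p) ℝ}
    (hq : IsSubgrad r x q) (heq : A * P + gradS g x + q = 0) (hx : A * x = 0) :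
    ∃ xbar : Fin p → ℝ, (∀ i, x i = xbar) ∧ ∀ u : Fin p → ℝ,
      (∑ i, (s i ((WithLp.equiv 2 (Fin p → ℝ)).symm xbar) + r i xbar)) ≤
        ∑ i, (s i ((WithLp.equiv 2 (Fin p → ℝ)).symm u) + r i u) := by
  obtain ⟨xbar, hrow⟩ := (mul_eq_zero_iff_exists_rows_eq hker x).1 hx
  refine ⟨xbar, hrow, fun u => ?_⟩
  have hqG : q + gradS g x = A * -P := by
    rw [Matrix.mul_neg, eq_neg_iff_add_eq_zero, ← heq]; abel
  have hℓC : ∀ v ∈ LinearMap.ker (mulLeftLinearMap (Fin p) ℝ A),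
      iprod (q + gradS g x) v = 0 := fun v hv => by
    rw [hqG, iprod_mul_left, hA, show A * v = 0 from hv]
    simp [iprod]
  have hsub : ∀ v, rsum r x + iprod (q + gradS g x) v - iprod (gradS g x) v ≤ rsum r (x + v) :=
    fun v => by
      have := hq (x + v)
      rw [add_sub_cancel_left] at this
      rw [iprod_add_left]
      linarith
  set Y : Matrix (Fin n) (Fin p) ℝ := Matrix.of fun _ => u
  have hY : A * (Y - x) = 0 :=
    (mul_eq_zero_iff_exists_rows_eq hker _).2 ⟨u - xbar, fun i => by rw [← hrow i]; rfl⟩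
  have := le_add_of_subgradient (convexOn_ssum hs) (hasLineDerivAt_ssum hg x) _ _ hℓC hsub
    (Y - x) hY
  rwa [add_sub_cancel, ssum_add_rsum_of_rows_eq s r hrow,
    ssum_add_rsum_of_rows_eq s r (y := Y) fun _ => rfl] at this

end Optimality

lemma nidsFixed_of_optimality {n p : ℕ} {W : Matrix (Fin n) (Fin n) ℝ} {α : Fin n → ℝ}
    (hα : ∀ i, 0 < α i) (c : ℝ) {g : Fin n → EuclideanSpace ℝ (Fin p) → EuclideanSpace ℝ (Fin p)}
    {r : Fin n → (Fin p → ℝ) → ℝ} {x P q : Matrix (Fin n) (Fin p) ℝ} (hq : IsSubgrad r x q)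
    (heq : (1 - W) * P + gradS g x + q = 0) (hx : (1 - W) * x = 0) :
    NIDSFixed W α c g r ((1 - W) * P) (x + Matrix.diagonal α * q) := by
  have hΛ : Matrix.diagonal α * ((1 - W) * P) + Matrix.diagonal α * gradS g x +
      Matrix.diagonal α * q = 0 := by
    rw [← Matrix.mul_add, ← Matrix.mul_add, heq, Matrix.mul_zero]
  refine ⟨x, proxMin_of_isSubgrad hα hq, ?_, by linear_combination (norm := module) hΛ⟩
  have hinner : (2 : ℝ) • x - (x + Matrix.diagonal α * q) - Matrix.diagonal α * gradS g x -
      Matrix.diagonal α * ((1 - W) * P) = x := by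
    linear_combination (norm := module) -hΛ
  rw [hinner, hx, smul_zero, add_zero]

theorem nids_optimality_condition_general
    {n p : ℕ}
    (W : Matrix (Fin n) (Fin n) ℝ) (hW : IsMixing W)
    (α : Fin n → ℝ) (hα : ∀ i, 0 < α i) (c : ℝ)
    (s : Fin n → EuclideanSpace ℝ (Fin p) → ℝ)
    (g : Fin n → EuclideanSpace ℝ (Fin p) → EuclideanSpace ℝ (Fin p))
    (hs : ∀ i, ConvexOn ℝ Set.univ (s i))
    (hg : ∀ i v, HasGradientAt (s i) (g i v) v)
    (r : Fin n → (Fin p → ℝ) → ℝ) (hr : ∀ i, ConvexOn ℝ Set.univ (r i))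
    (xstar : Matrix (Fin n) (Fin p) ℝ) :
    ((∃ xbar : Fin p → ℝ, (∀ i, xstar i = xbar) ∧
        ∀ u : Fin p → ℝ,
          (∑ i, (s i ((WithLp.equiv 2 (Fin p → ℝ)).symm xbar) + r i xbar)) ≤
            ∑ i, (s i ((WithLp.equiv 2 (Fin p → ℝ)).symm u) + r i u)) ↔
      ∃ pstar q : Matrix (Fin n) (Fin p) ℝ, IsSubgrad r xstar q ∧
        (1 - W) * pstar + gradS g xstar + q = 0 ∧ (1 - W) * xstar = 0) ∧
    ∀ pstar q : Matrix (Fin n) (Fin p) ℝ, IsSubgrad r xstar q →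
      (1 - W) * pstar + gradS g xstar + q = 0 → (1 - W) * xstar = 0 →
      NIDSFixed W α c g r ((1 - W) * pstar) (xstar + Matrix.diagonal α * q) := by
  obtain ⟨hsym, hker, -, -⟩ := hW
  have hA : (1 - W)ᵀ = 1 - W := by rw [Matrix.transpose_sub, Matrix.transpose_one, hsym]
  refine ⟨⟨fun ⟨_, hrow, hmin⟩ => ?_, fun ⟨_, _, hq, heq, hx⟩ => ?_⟩,
    fun _ _ hq heq hx => nidsFixed_of_optimality hα c hq heq hx⟩
  · exact exists_optimality_of_consensus_minimizer hA hker hs hg hr hrow hmin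
  · exact consensus_minimizer_of_optimality hA hker hs hg hq heq hx

/-- Lemma 3.2: optimality condition, and the induced fixed point of NIDS. -/
theorem nids_optimality_condition
    {n p : ℕ}
    (W : Matrix (Fin n) (Fin n) ℝ) (hW : IsMixing W)
    (α : Fin n → ℝ) (hα : ∀ i, 0 < α i) (c : ℝ) (hc : 0 < c)
    (hcW : ((1 : Matrix (Fin n) (Fin n) ℝ) -
      c • ((Matrix.diagonal fun i => Real.sqrt (α i)) * (1 - W) *
        Matrix.diagonal fun i => Real.sqrt (α i))).PosDef)
    (s : Fin n → EuclideanSpace ℝ (Fin p) → ℝ)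
    (g : Fin n → EuclideanSpace ℝ (Fin p) → EuclideanSpace ℝ (Fin p))
    (hs : ∀ i, ConvexOn ℝ Set.univ (s i))
    (hg : ∀ i v, HasGradientAt (s i) (g i v) v)
    (r : Fin n → (Fin p → ℝ) → ℝ) (hr : ∀ i, ConvexOn ℝ Set.univ (r i))
    (xstar : Matrix (Fin n) (Fin p) ℝ) :
    ((∃ xbar : Fin p → ℝ, (∀ i, xstar i = xbar) ∧
        ∀ u : Fin p → ℝ,
          (∑ i, (s i ((WithLp.equiv 2 (Fin p → ℝ)).symm xbar) + r i xbar)) ≤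
            ∑ i, (s i ((WithLp.equiv 2 (Fin p → ℝ)).symm u) + r i u)) ↔
      ∃ pstar q : Matrix (Fin n) (Fin p) ℝ, IsSubgrad r xstar q ∧
        (1 - W) * pstar + gradS g xstar + q = 0 ∧ (1 - W) * xstar = 0) ∧
    ∀ pstar q : Matrix (Fin n) (Fin p) ℝ, IsSubgrad r xstar q →
      (1 - W) * pstar + gradS g xstar + q = 0 → (1 - W) * xstar = 0 →
      NIDSFixed W α c g r ((1 - W) * pstar) (xstar + Matrix.diagonal α * q) :=
  nids_optimality_condition_general W hW α hα c s g hs hg r hr xstar
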